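/- arXiv:2111.04402 — 8 statements merged into one kernel-verified Lean document; each statement's English description precedes it below -/
import Mathlib

section
/- For every ε ∈ (0,1], every δ ∈ (0,1], and every x ≥ 1, one has |log((ε + x)/(1 + εx)) − log x| ≤ ε + (1/δ)·(εx)^δ. (This verifies the large-argument part of condition (A4) of the paper's Assumption 2 for the typical regularization function.) -/
lemma log_one_add_le_rpow_div (δ t : ℝ) (hδ : 0 < δ) (hδ1 : δ ≤ 1) (ht : 0 ≤ t) :
    Real.log (1 + t) ≤ (1 / δ) * t ^ δ := by
  have h1t : (0:ℝ) < 1 + t := by linarith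
  have hlog : Real.log ((1 + t) ^ δ) ≤ (1 + t) ^ δ - 1 :=
    Real.log_le_sub_one_of_pos (Real.rpow_pos_of_pos h1t δ)
  rw [Real.log_rpow h1t] at hlog
  have hsub : (1 + t) ^ δ ≤ 1 + t ^ δ := by
    have := NNReal.rpow_add_le_add_rpow (1 : NNReal) (⟨t, ht⟩ : NNReal) hδ.le hδ1
    have h' := NNReal.coe_le_coe.mpr this
    push_cast at h'
    simpa using Real.rpow_add_le_add_rpow zero_le_one ht hδ.le hδ1
  have : δ * Real.log (1 + t) ≤ t ^ δ := by linarith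
  rw [div_mul_eq_mul_div, le_div_iff₀ hδ, mul_comm] at *
  linarith

/-- Large-argument part of condition (A4) for the typical regularization
function: for `ε ∈ (0,1]`, `δ ∈ (0,1]` and `x ≥ 1`,
`|log((ε + x)/(1 + εx)) − log x| ≤ ε + (1/δ)(εx)^δ`. -/
theorem stmt_3 (ε δ x : ℝ) (hε : ε ∈ Set.Ioc (0 : ℝ) 1) (hδ : δ ∈ Set.Ioc (0 : ℝ) 1)
    (hx : 1 ≤ x) :
    |Real.log ((ε + x) / (1 + ε * x)) - Real.log x| ≤ ε + (1 / δ) * (ε * x) ^ δ := by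
  obtain ⟨hε0, hε1⟩ := hε
  obtain ⟨hδ0, hδ1⟩ := hδ
  have hx0 : (0:ℝ) < x := by linarith
  have hεx : (0:ℝ) < ε * x := mul_pos hε0 hx0
  have h1 : (0:ℝ) < 1 + ε * x := by linarith
  have h2 : (0:ℝ) < ε + x := by linarith
  rw [Real.log_div h2.ne' h1.ne']
  -- bound log(ε+x) - log x ≤ ε
  have hA : Real.log (ε + x) - Real.log x ≤ ε := by
    rw [← Real.log_div h2.ne' hx0.ne']
    have hle : Real.log ((ε + x) / x) ≤ (ε + x) / x - 1 :=
      Real.log_le_sub_one_of_pos (div_pos h2 hx0)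
    have : (ε + x) / x - 1 = ε / x := by field_simp; ring
    have hεx' : ε / x ≤ ε := by
      rw [div_le_iff₀ hx0]
      nlinarith
    linarith
  have hA0 : 0 ≤ Real.log (ε + x) - Real.log x := by
    have := Real.log_le_log hx0 (by linarith : x ≤ ε + x)
    linarith
  have hB0 : 0 ≤ Real.log (1 + ε * x) := Real.log_nonneg (by linarith)
  have hB : Real.log (1 + ε * x) ≤ (1 / δ) * (ε * x) ^ δ :=
    log_one_add_le_rpow_div δ (ε * x) hδ0 hδ1 hεx.le
  have hrpow0 : 0 ≤ (1 / δ) * (ε * x) ^ δ :=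
    mul_nonneg (by positivity) (Real.rpow_nonneg hεx.le δ)
  rw [abs_le]
  constructor <;> linarith
end

section
/- For every ε ∈ (0,1], the function f_ε(x) = log((ε + x)/(1 + εx)) is nondecreasing on [0,∞), and for all a, b > 0 one has |f_ε(a) − f_ε(b)| ≤ |log a − log b|. -/
lemma stmt5_mono (ε : ℝ) (hε0 : 0 < ε) (hε1 : ε ≤ 1) {x y : ℝ} (hx : 0 ≤ x)
    (hxy : x ≤ y) :
    Real.log ((ε + x) / (1 + ε * x)) ≤ Real.log ((ε + y) / (1 + ε * y)) := by
  have hy : 0 ≤ y := hx.trans hxy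
  have h1 : (0:ℝ) < 1 + ε * x := by positivity
  have h2 : (0:ℝ) < 1 + ε * y := by positivity
  have hnum : (0:ℝ) < ε + x := by positivity
  apply Real.log_le_log (by positivity)
  rw [div_le_div_iff₀ h1 h2]
  nlinarith [mul_nonneg (mul_nonneg hε0.le hε0.le) (sub_nonneg.2 hxy),
    mul_nonneg (sub_nonneg.2 hε1) (sub_nonneg.2 hxy)]

lemma stmt5_key (ε : ℝ) (hε0 : 0 < ε) (hε1 : ε ≤ 1) {a b : ℝ} (ha : 0 < a)
    (hab : a ≤ b) :
    Real.log ((ε + b) / (1 + ε * b)) - Real.log ((ε + a) / (1 + ε * a)) ≤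
      Real.log b - Real.log a := by
  have hb : 0 < b := ha.trans_le hab
  have h1 : (0:ℝ) < 1 + ε * a := by positivity
  have h2 : (0:ℝ) < 1 + ε * b := by positivity
  have hda : (0:ℝ) < (ε + a) / (1 + ε * a) := by positivity
  have hdb : (0:ℝ) < (ε + b) / (1 + ε * b) := by positivity
  have e1 : Real.log ((ε + b) / (1 + ε * b) / b)
      = Real.log ((ε + b) / (1 + ε * b)) - Real.log b :=
    Real.log_div hdb.ne' hb.ne'
  have e2 : Real.log ((ε + a) / (1 + ε * a) / a)
      = Real.log ((ε + a) / (1 + ε * a)) - Real.log a :=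
    Real.log_div hda.ne' ha.ne'
  have hmain : Real.log ((ε + b) / (1 + ε * b) / b)
      ≤ Real.log ((ε + a) / (1 + ε * a) / a) := by
    apply Real.log_le_log (by positivity)
    rw [div_div, div_div, div_le_div_iff₀ (by positivity) (by positivity)]
    nlinarith [mul_nonneg (mul_nonneg hε0.le (sub_nonneg.2 hab)) (mul_pos ha hb).le,
      mul_nonneg hε0.le (sub_nonneg.2 hab),
      mul_nonneg (mul_nonneg (mul_nonneg hε0.le hε0.le) (sub_nonneg.2 hab)) (add_pos ha hb).le]
  linarith [e1 ▸ e2 ▸ hmain]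

/-- For `ε ∈ (0,1]`, the function `f_ε(x) = log((ε + x)/(1 + εx))` is
nondecreasing on `[0,∞)`, and for all `a, b > 0` one has
`|f_ε(a) − f_ε(b)| ≤ |log a − log b|`. -/
theorem stmt_5 (ε : ℝ) (hε : ε ∈ Set.Ioc (0 : ℝ) 1) :
    MonotoneOn (fun x : ℝ => Real.log ((ε + x) / (1 + ε * x))) (Set.Ici 0) ∧
    ∀ a b : ℝ, 0 < a → 0 < b →
      |Real.log ((ε + a) / (1 + ε * a)) - Real.log ((ε + b) / (1 + ε * b))| ≤
        |Real.log a - Real.log b| := by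
  obtain ⟨hε0, hε1⟩ := hε
  constructor
  · intro x hx y _ hxy
    exact stmt5_mono ε hε0 hε1 hx hxy
  · intro a b ha hb
    rcases le_total a b with hab | hab
    · have h1 := stmt5_key ε hε0 hε1 ha hab
      have h2 := stmt5_mono ε hε0 hε1 ha.le hab
      have h3 := Real.log_le_log ha hab
      rw [abs_sub_comm, abs_of_nonneg (sub_nonneg.2 h2), abs_sub_comm,
        abs_of_nonneg (sub_nonneg.2 h3)]
      exact h1
    · have h1 := stmt5_key ε hε0 hε1 hb hab
      have h2 := stmt5_mono ε hε0 hε1 hb.le hab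
      have h3 := Real.log_le_log hb hab
      rw [abs_of_nonneg (sub_nonneg.2 h2), abs_of_nonneg (sub_nonneg.2 h3)]
      exact h1
end

section
/- For every ε ∈ (0,1] and all complex numbers z, w one has |Im[(f_ε(|z|²)·z − f_ε(|w|²)·w)·(conj(z) − conj(w))]| ≤ 2·|z − w|², where f_ε(x) = log((ε + x)/(1 + εx)). (This verifies condition (A2) of the paper's Assumption 2 for the typical regularization function, with a constant independent of ε.) -/
lemma im_mul_sub_conj (a b : ℝ) (z w : ℂ) :
    (((a:ℂ)*z - (b:ℂ)*w) * ((starRingEnd ℂ) z - (starRingEnd ℂ) w)).im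
      = (b - a) * (z * (starRingEnd ℂ) w).im := by
  simp [Complex.mul_im, Complex.sub_im, Complex.sub_re, Complex.conj_re, Complex.conj_im]
  ring

lemma flog_diff_le (ε x y : ℝ) (hε : 0 < ε) (hy : 0 < y) (hxy : y ≤ x) :
    Real.log ((ε + x)/(1 + ε*x)) - Real.log ((ε + y)/(1 + ε*y)) ≤ Real.log x - Real.log y := by
  have hx : 0 < x := lt_of_lt_of_le hy hxy
  have p1 : (0:ℝ) < ε + x := by positivity
  have p2 : (0:ℝ) < 1 + ε*x := by positivity
  have p3 : (0:ℝ) < ε + y := by positivity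
  have p4 : (0:ℝ) < 1 + ε*y := by positivity
  rw [Real.log_div p1.ne' p2.ne', Real.log_div p3.ne' p4.ne']
  have key : (ε+x)*((1+ε*y)*y) ≤ (ε+y)*((1+ε*x)*x) := by
    nlinarith [mul_nonneg (sub_nonneg.2 hxy) hε.le,
      mul_nonneg (mul_nonneg (sub_nonneg.2 hxy) hε.le) hε.le,
      mul_nonneg (mul_nonneg (mul_nonneg (sub_nonneg.2 hxy) hε.le) hx.le) hy.le,
      mul_nonneg (mul_nonneg (mul_nonneg (sub_nonneg.2 hxy) hε.le) hε.le) (add_nonneg hx.le hy.le)]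
  have hlog := Real.log_le_log (by positivity) key
  rw [Real.log_mul p1.ne' (by positivity), Real.log_mul p4.ne' hy.ne',
      Real.log_mul p3.ne' (by positivity), Real.log_mul p2.ne' hx.ne'] at hlog
  linarith

lemma flog_diff_nonneg (ε x y : ℝ) (hε0 : 0 < ε) (hε1 : ε ≤ 1) (hy : 0 ≤ y) (hxy : y ≤ x) :
    0 ≤ Real.log ((ε + x)/(1 + ε*x)) - Real.log ((ε + y)/(1 + ε*y)) := by
  have hx : 0 ≤ x := le_trans hy hxy
  have p2 : (0:ℝ) < 1 + ε*x := by positivity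
  have p4 : (0:ℝ) < 1 + ε*y := by positivity
  have h : (ε+y)/(1+ε*y) ≤ (ε+x)/(1+ε*x) := by
    rw [div_le_div_iff₀ p4 p2]
    nlinarith [mul_nonneg (sub_nonneg.2 hxy)
      (mul_nonneg (sub_nonneg.2 hε1) (by linarith : (0:ℝ) ≤ 1 + ε))]
  have := Real.log_le_log (by positivity) h
  linarith

lemma real_core_uv (u v L J R I : ℝ) (hu : 0 < u) (hv : 0 < v) (hvu : v ≤ u)
    (hJ : 0 ≤ J) (hJ2 : J^2 = I^2) (hL' : v * L ≤ u - v)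
    (hRI' : R^2 + I^2 = (u*v)^4) :
    4 * L * J ≤ 2 * ((u^2)^2 + (v^2)^2 - 2*R) := by
  have hP : (0:ℝ) < u*v := mul_pos hu hv
  have s1 : L*(u*v) ≤ u^2 - v^2 := by
    nlinarith [mul_le_mul_of_nonneg_left hL' hu.le, mul_le_mul_of_nonneg_left hvu hv.le]
  have s2 : 4*(L*(u*v))*J ≤ 4*(u^2-v^2)*J := by
    nlinarith [mul_le_mul_of_nonneg_right s1 hJ]
  have s3 : 4*((u^2-v^2)*J)*(u*v) ≤ 2*((u^2-v^2)^2*(u*v)^2 + J^2) := by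
    nlinarith [sq_nonneg ((u^2-v^2)*(u*v) - J)]
  have s4 : 2*((u^2-v^2)^2*(u*v)^2 + J^2) ≤ (2*((u^2)^2 + (v^2)^2 - 2*R))*(u*v)^2 := by
    have key : (2*((u^2)^2 + (v^2)^2 - 2*R))*(u*v)^2 - 2*((u^2-v^2)^2*(u*v)^2 + J^2)
        = 2*((u*v)^2 - R)^2 := by linear_combination -2*hRI' - 2*hJ2
    nlinarith [sq_nonneg ((u*v)^2 - R), key]
  have final : (4*L*J)*((u*v)^2) ≤ (2*((u^2)^2 + (v^2)^2 - 2*R))*((u*v)^2) := by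
    nlinarith [mul_le_mul_of_nonneg_right s2 hP.le]
  exact le_of_mul_le_mul_right final (by positivity)

lemma real_core (r s R I : ℝ) (hr : 0 < r) (hs : 0 < s) (hsr : s ≤ r)
    (hRI : R^2 + I^2 = r^2 * s^2) :
    (Real.log (r^2) - Real.log (s^2)) * |I| ≤ 2*(r^2 + s^2 - 2*R) := by
  set u := Real.sqrt r with hu_def
  set v := Real.sqrt s with hv_def
  have hu : 0 < u := Real.sqrt_pos.2 hr
  have hv : 0 < v := Real.sqrt_pos.2 hs
  have hu2 : u^2 = r := Real.sq_sqrt hr.le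
  have hv2 : v^2 = s := Real.sq_sqrt hs.le
  have hvu : v ≤ u := Real.sqrt_le_sqrt hsr
  set L := Real.log (u/v) with hL_def
  have hL : Real.log (u/v) ≤ u/v - 1 := Real.log_le_sub_one_of_pos (by positivity)
  have hL' : v * L ≤ u - v := by
    have := mul_le_mul_of_nonneg_left hL hv.le
    rw [mul_sub, mul_div_cancel₀ _ hv.ne', mul_one] at this
    exact this
  have hlog : Real.log (r^2) - Real.log (s^2) = 4 * L := by
    rw [← hu2, ← hv2, hL_def, Real.log_div hu.ne' hv.ne',
        show ((u^2)^2 : ℝ) = u^(4:ℕ) by ring, show ((v^2)^2 : ℝ) = v^(4:ℕ) by ring,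
        Real.log_pow, Real.log_pow]
    push_cast; ring
  rw [hlog, ← hu2, ← hv2]
  have hRI' : R^2 + I^2 = (u*v)^4 := by rw [← hu2, ← hv2] at hRI; linarith [hRI]
  exact real_core_uv u v L |I| R I hu hv hvu (abs_nonneg I) (sq_abs I) hL' hRI'

lemma stmt_6_aux (ε : ℝ) (hε0 : 0 < ε) (hε1 : ε ≤ 1) (z w : ℂ) (hw : w ≠ 0)
    (hzw : ‖w‖ ≤ ‖z‖) :
    |(((Real.log ((ε + ‖z‖ ^ 2) / (1 + ε * ‖z‖ ^ 2)) : ℂ) * z -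
        (Real.log ((ε + ‖w‖ ^ 2) / (1 + ε * ‖w‖ ^ 2)) : ℂ) * w) *
        ((starRingEnd ℂ) z - (starRingEnd ℂ) w)).im| ≤
      2 * ‖z - w‖ ^ 2 := by
  have hs : 0 < ‖w‖ := norm_pos_iff.mpr hw
  have hr : 0 < ‖z‖ := lt_of_lt_of_le hs hzw
  set r := ‖z‖ with hr_def
  set s := ‖w‖ with hs_def
  set a := Real.log ((ε + r^2)/(1 + ε*r^2)) with ha_def
  set b := Real.log ((ε + s^2)/(1 + ε*s^2)) with hb_def
  rw [im_mul_sub_conj]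
  set R := (z * (starRingEnd ℂ) w).re with hR_def
  set I := (z * (starRingEnd ℂ) w).im with hI_def
  have hab : 0 ≤ a - b :=
    flog_diff_nonneg ε (r^2) (s^2) hε0 hε1 (by positivity) (by nlinarith)
  have h1 : a - b ≤ Real.log (r^2) - Real.log (s^2) :=
    flog_diff_le ε (r^2) (s^2) hε0 (by positivity) (by nlinarith)
  have hRI : R^2 + I^2 = r^2 * s^2 := by
    have h := Complex.sq_norm (z * (starRingEnd ℂ) w)
    rw [Complex.normSq_apply] at h
    rw [norm_mul, Complex.norm_conj] at h
    rw [hR_def, hI_def]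
    nlinarith [h]
  have h2 := real_core r s R I hr hs hzw hRI
  have hrhs : ‖z-w‖^2 = r^2 + s^2 - 2*R := by
    rw [Complex.sq_norm, Complex.normSq_sub, ← Complex.sq_norm z, ← Complex.sq_norm w, hR_def]
  have habs : |(b - a) * I| = (a - b) * |I| := by
    rw [abs_mul, abs_sub_comm, abs_of_nonneg hab]
  rw [habs, hrhs]
  calc (a - b) * |I| ≤ (Real.log (r^2) - Real.log (s^2)) * |I| :=
        mul_le_mul_of_nonneg_right h1 (abs_nonneg I)
    _ ≤ 2*(r^2 + s^2 - 2*R) := h2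

/-- Condition (A2) for the typical regularization function, with a constant
independent of `ε`: for `ε ∈ (0,1]` and all `z, w : ℂ`,
`|Im[(f_ε(|z|²)z − f_ε(|w|²)w)(conj z − conj w)]| ≤ 2|z − w|²`,
where `f_ε(x) = log((ε + x)/(1 + εx))`. -/
theorem stmt_6 (ε : ℝ) (hε : ε ∈ Set.Ioc (0 : ℝ) 1) (z w : ℂ) :
    |(((Real.log ((ε + ‖z‖ ^ 2) / (1 + ε * ‖z‖ ^ 2)) : ℂ) * z -
        (Real.log ((ε + ‖w‖ ^ 2) / (1 + ε * ‖w‖ ^ 2)) : ℂ) * w) *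
        ((starRingEnd ℂ) z - (starRingEnd ℂ) w)).im| ≤
      2 * ‖z - w‖ ^ 2 := by
  obtain ⟨hε0, hε1⟩ := hε
  rcases le_total (‖w‖) (‖z‖) with h | h
  · rcases eq_or_ne w 0 with rfl | hw
    · rw [im_mul_sub_conj]
      simp
    · exact stmt_6_aux ε hε0 hε1 z w hw h
  · rcases eq_or_ne z 0 with rfl | hz
    · rw [im_mul_sub_conj]
      simp
    · have key := stmt_6_aux ε hε0 hε1 w z hz h
      have e1 : (((Real.log ((ε + ‖z‖ ^ 2) / (1 + ε * ‖z‖ ^ 2)) : ℂ) * z -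
          (Real.log ((ε + ‖w‖ ^ 2) / (1 + ε * ‖w‖ ^ 2)) : ℂ) * w) *
          ((starRingEnd ℂ) z - (starRingEnd ℂ) w)) =
          (((Real.log ((ε + ‖w‖ ^ 2) / (1 + ε * ‖w‖ ^ 2)) : ℂ) * w -
          (Real.log ((ε + ‖z‖ ^ 2) / (1 + ε * ‖z‖ ^ 2)) : ℂ) * z) *
          ((starRingEnd ℂ) w - (starRingEnd ℂ) z)) := by ring
      rw [e1, norm_sub_rev]
      exact key
end

section
/- For all complex numbers z, w one has |Im[(z·log(|z|²) − w·log(|w|²))·(conj(z) − conj(w))]| ≤ 2·|z − w|², with the convention that t·log t = 0 at t = 0. (This is the ε = 0 case, f_0(x) = log x, of condition (A2) used for the logarithmic nonlinearity itself.) -/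
private lemma stmt7_key (u v : ℂ) :
    ((u * (Real.log (‖u‖ ^ 2) : ℂ) -
        v * (Real.log (‖v‖ ^ 2) : ℂ)) *
        ((starRingEnd ℂ) u - (starRingEnd ℂ) v)).im
      = (u * (starRingEnd ℂ) v).im *
          (Real.log (‖v‖ ^ 2) - Real.log (‖u‖ ^ 2)) := by
  simp [Complex.mul_im, Complex.sub_im, Complex.sub_re, Complex.mul_re,
    Complex.conj_re, Complex.conj_im, Complex.ofReal_re, Complex.ofReal_im]
  ring

private lemma stmt7_main (z w : ℂ) (h : ‖w‖ ≤ ‖z‖) :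
    |((z * (Real.log (‖z‖ ^ 2) : ℂ) -
        w * (Real.log (‖w‖ ^ 2) : ℂ)) *
        ((starRingEnd ℂ) z - (starRingEnd ℂ) w)).im| ≤
      2 * ‖z - w‖ ^ 2 := by
  rw [stmt7_key]
  rcases eq_or_lt_of_le (norm_nonneg w) with hb0 | hb0
  · have hw : w = 0 := by rwa [eq_comm, norm_eq_zero] at hb0
    simp [hw]
  set a := ‖z‖ with ha
  set b := ‖w‖ with hbdef
  set C := ‖z - w‖ with hC
  have hCnn : 0 ≤ C := norm_nonneg _
  have ha0 : 0 < a := lt_of_lt_of_le hb0 h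
  have h1 : |(z * (starRingEnd ℂ) w).im| ≤ C * b := by
    have him : (z * (starRingEnd ℂ) w).im = ((z - w) * (starRingEnd ℂ) w).im := by
      rw [sub_mul, Complex.sub_im, Complex.mul_conj]
      simp
    rw [him]
    calc |((z - w) * (starRingEnd ℂ) w).im|
        ≤ ‖(z - w) * (starRingEnd ℂ) w‖ := Complex.abs_im_le_norm _
      _ = C * b := by rw [norm_mul, Complex.norm_conj]
  have hab : a - b ≤ C := by
    have h' : a ≤ C + b := by
      calc a = ‖(z - w) + w‖ := by rw [sub_add_cancel]
        _ ≤ C + b := norm_add_le _ _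
    linarith
  have h2 : |Real.log (b ^ 2) - Real.log (a ^ 2)| ≤ 2 * C / b := by
    have hlog : Real.log (a ^ 2) - Real.log (b ^ 2) = 2 * Real.log (a / b) := by
      rw [Real.log_div (ne_of_gt ha0) (ne_of_gt hb0), Real.log_pow, Real.log_pow]
      push_cast; ring
    have h1ab : (1 : ℝ) ≤ a / b := (one_le_div hb0).2 h
    have hlb : 0 ≤ Real.log (a ^ 2) - Real.log (b ^ 2) := by
      rw [hlog]
      have := Real.log_nonneg h1ab
      positivity
    rw [abs_sub_comm, abs_of_nonneg hlb, hlog]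
    have hle : Real.log (a / b) ≤ (a - b) / b := by
      have := Real.log_le_sub_one_of_pos (div_pos ha0 hb0)
      calc Real.log (a / b) ≤ a / b - 1 := this
        _ = (a - b) / b := by field_simp
    calc 2 * Real.log (a / b) ≤ 2 * ((a - b) / b) := by linarith
      _ ≤ 2 * (C / b) := by gcongr
      _ = 2 * C / b := by ring
  calc |(z * (starRingEnd ℂ) w).im *
          (Real.log (b ^ 2) - Real.log (a ^ 2))|
      = |(z * (starRingEnd ℂ) w).im| * |Real.log (b ^ 2) - Real.log (a ^ 2)| :=
        abs_mul _ _
    _ ≤ (C * b) * (2 * C / b) := by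
        apply mul_le_mul h1 h2 (abs_nonneg _) (by positivity)
    _ = 2 * C ^ 2 := by field_simp

/-- The `ε = 0` case (`f_0(x) = log x`) of condition (A2): for all `z, w : ℂ`,
`|Im[(z log|z|² − w log|w|²)(conj z − conj w)]| ≤ 2|z − w|²`, with the
convention `t log t = 0` at `t = 0` (automatic since `Real.log 0 = 0`). -/
theorem stmt_7 (z w : ℂ) :
    |((z * (Real.log (‖z‖ ^ 2) : ℂ) -
        w * (Real.log (‖w‖ ^ 2) : ℂ)) *
        ((starRingEnd ℂ) z - (starRingEnd ℂ) w)).im| ≤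
      2 * ‖z - w‖ ^ 2 := by
  rcases le_total (‖w‖) (‖z‖) with h | h
  · exact stmt7_main z w h
  · have key := stmt7_main w z h
    rw [stmt7_key] at key ⊢
    have hswap : (w * (starRingEnd ℂ) z).im = -(z * (starRingEnd ℂ) w).im := by
      simp [Complex.mul_im, Complex.conj_re, Complex.conj_im]; ring
    have habs : ‖w - z‖ = ‖z - w‖ := by
      exact norm_sub_rev w z
    rw [hswap, habs] at key
    calc |(z * (starRingEnd ℂ) w).im *
            (Real.log (‖w‖ ^ 2) - Real.log (‖z‖ ^ 2))|
        = |-(z * (starRingEnd ℂ) w).im *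
            (Real.log (‖z‖ ^ 2) - Real.log (‖w‖ ^ 2))| := by
          rw [show -(z * (starRingEnd ℂ) w).im *
              (Real.log (‖z‖ ^ 2) - Real.log (‖w‖ ^ 2)) =
              (z * (starRingEnd ℂ) w).im *
              (Real.log (‖w‖ ^ 2) - Real.log (‖z‖ ^ 2)) by ring]
      _ ≤ 2 * ‖z - w‖ ^ 2 := key
end

section
/- For every ε ∈ (0,1] and all complex numbers z, w one has |f_ε(|z|²)·z − f_ε(|w|²)·w| ≤ (2 + |log ε|)·|z − w|, where f_ε(x) = log((ε + x)/(1 + εx)). (This verifies the Lipschitz condition (con-f), |f_ε(|x|²)x − f_ε(|y|²)y| ≤ C(1 + |log ε|)|x − y|, required in the paper's strong convergence theorems, for the typical regularization function.) -/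
section aux

variable (ε : ℝ)

private lemma floge_bound (hε0 : 0 < ε) (hε1 : ε ≤ 1) (x : ℝ) (hx : 0 ≤ x) :
    |Real.log ((ε + x) / (1 + ε * x))| ≤ |Real.log ε| := by
  have hden : 0 < 1 + ε * x := by nlinarith
  have hnum : 0 < ε + x := by nlinarith
  have hεle : Real.log ε ≤ 0 := Real.log_nonpos hε0.le hε1
  rw [abs_of_nonpos hεle, abs_le]
  constructor
  · rw [neg_neg]
    apply Real.log_le_log hε0
    rw [le_div_iff₀ hden]
    nlinarith [mul_nonneg (by nlinarith : (0:ℝ) ≤ 1 - ε * ε) hx]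
  · have h1 : (ε + x) / (1 + ε * x) ≤ 1 / ε := by
      rw [div_le_div_iff₀ hden hε0]
      nlinarith
    calc Real.log ((ε + x) / (1 + ε * x)) ≤ Real.log (1 / ε) :=
          Real.log_le_log (div_pos hnum hden) h1
      _ = -Real.log ε := by rw [one_div, Real.log_inv]

private lemma floge_mono (hε0 : 0 < ε) (hε1 : ε ≤ 1) (s t : ℝ) (hs : 0 ≤ s) (hst : s ≤ t) :
    Real.log ((ε + s ^ 2) / (1 + ε * s ^ 2)) ≤ Real.log ((ε + t ^ 2) / (1 + ε * t ^ 2)) := by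
  have h1 : 0 < 1 + ε * s ^ 2 := by nlinarith
  have h2 : 0 < 1 + ε * t ^ 2 := by nlinarith
  have h3 : 0 < ε + s ^ 2 := by nlinarith
  have hts2 : 0 ≤ t ^ 2 - s ^ 2 := by nlinarith
  apply Real.log_le_log (div_pos h3 h1)
  rw [div_le_div_iff₀ h1 h2]
  nlinarith [mul_nonneg (by nlinarith : (0:ℝ) ≤ 1 - ε * ε) hts2]

private lemma floge_diff (hε0 : 0 < ε) (hε1 : ε ≤ 1) (s t : ℝ) (hs : 0 < s) (hst : s ≤ t) :
    Real.log ((ε + t ^ 2) / (1 + ε * t ^ 2)) - Real.log ((ε + s ^ 2) / (1 + ε * s ^ 2))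
      ≤ 2 * Real.log (t / s) := by
  have ht : 0 < t := lt_of_lt_of_le hs hst
  have h1 : 0 < 1 + ε * s ^ 2 := by nlinarith
  have h2 : 0 < 1 + ε * t ^ 2 := by nlinarith
  have h3 : 0 < ε + s ^ 2 := by nlinarith
  have h4 : 0 < ε + t ^ 2 := by nlinarith
  have hts2 : 0 ≤ t ^ 2 - s ^ 2 := by nlinarith
  have key : (ε + t ^ 2) / (1 + ε * t ^ 2)
      ≤ (t / s) ^ 2 * ((ε + s ^ 2) / (1 + ε * s ^ 2)) := by
    rw [div_pow, div_mul_div_comm, div_le_div_iff₀ h2 (by positivity)]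
    nlinarith [mul_nonneg hε0.le hts2,
      mul_nonneg (mul_nonneg hε0.le hε0.le)
        (mul_nonneg hts2 (by positivity : (0:ℝ) ≤ t ^ 2 + s ^ 2)),
      mul_nonneg (mul_nonneg hε0.le (by positivity : (0:ℝ) ≤ s ^ 2 * t ^ 2)) hts2]
  have hlog := Real.log_le_log (div_pos h4 h2) key
  rw [Real.log_mul (by positivity) (by positivity), Real.log_pow] at hlog
  push_cast at hlog
  linarith

end aux

private lemma stmt8_aux (ε : ℝ) (hε0 : 0 < ε) (hε1 : ε ≤ 1) (z w : ℂ)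
    (h : ‖z‖ ≤ ‖w‖) :
    ‖(Real.log ((ε + ‖z‖ ^ 2) / (1 + ε * ‖z‖ ^ 2)) : ℂ) * z -
        (Real.log ((ε + ‖w‖ ^ 2) / (1 + ε * ‖w‖ ^ 2)) : ℂ) * w‖ ≤
      (2 + |Real.log ε|) * ‖z - w‖ := by
  set s := ‖z‖ with hsdef
  set t := ‖w‖ with htdef
  have hs0 : 0 ≤ s := norm_nonneg z
  set a := Real.log ((ε + s ^ 2) / (1 + ε * s ^ 2)) with hadef
  set b := Real.log ((ε + t ^ 2) / (1 + ε * t ^ 2)) with hbdef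
  have hab : a ≤ b := floge_mono ε hε0 hε1 s t hs0 h
  have hbbd : |b| ≤ |Real.log ε| := by
    simpa [hbdef] using floge_bound ε hε0 hε1 (t ^ 2) (by positivity)
  have hsplit : (a : ℂ) * z - (b : ℂ) * w = (b : ℂ) * (z - w) + ((a : ℂ) - b) * z := by ring
  have hts : t - s ≤ ‖z - w‖ := by
    have h1 := norm_sub_norm_le w z
    calc t - s ≤ ‖w - z‖ := h1
      _ = ‖z - w‖ := norm_sub_rev w z
  have hterm2 : (b - a) * s ≤ 2 * ‖z - w‖ := by
    rcases eq_or_lt_of_le hs0 with hs | hs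
    · rw [← hs, mul_zero]
      exact mul_nonneg (by norm_num) (norm_nonneg _)
    · have hdiff := floge_diff ε hε0 hε1 s t hs h
      have hlog : Real.log (t / s) ≤ t / s - 1 :=
        Real.log_le_sub_one_of_pos (div_pos (lt_of_lt_of_le hs h) hs)
      have h1 : (b - a) * s ≤ 2 * Real.log (t / s) * s := by
        apply mul_le_mul_of_nonneg_right _ hs0
        linarith
      have h2 : 2 * Real.log (t / s) * s ≤ 2 * (t - s) := by
        have h3 : Real.log (t / s) * s ≤ (t / s - 1) * s :=
          mul_le_mul_of_nonneg_right hlog hs0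
        have heq : (t / s - 1) * s = t - s := by field_simp
        nlinarith
      linarith
  calc ‖(a : ℂ) * z - (b : ℂ) * w‖
      = ‖(b : ℂ) * (z - w) + ((a : ℂ) - b) * z‖ := by rw [hsplit]
    _ ≤ ‖(b : ℂ) * (z - w)‖ + ‖((a : ℂ) - b) * z‖ :=
        norm_add_le _ _
    _ = |b| * ‖z - w‖ + |a - b| * s := by
        rw [norm_mul, norm_mul, Complex.norm_real, Real.norm_eq_abs, ← Complex.ofReal_sub, Complex.norm_real, Real.norm_eq_abs]
    _ ≤ |Real.log ε| * ‖z - w‖ + (b - a) * s := by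
        have heq : |a - b| = b - a := by rw [abs_sub_comm, abs_of_nonneg (by linarith)]
        rw [heq]
        have hmul := mul_le_mul_of_nonneg_right hbbd (norm_nonneg (z - w))
        linarith
    _ ≤ |Real.log ε| * ‖z - w‖ + 2 * ‖z - w‖ := by linarith
    _ = (2 + |Real.log ε|) * ‖z - w‖ := by ring

/-- The Lipschitz condition (con-f) for the typical regularization function:
for `ε ∈ (0,1]` and all `z, w : ℂ`,
`|f_ε(|z|²)z − f_ε(|w|²)w| ≤ (2 + |log ε|)|z − w|`,
where `f_ε(x) = log((ε + x)/(1 + εx))`. -/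
theorem stmt_8 (ε : ℝ) (hε : ε ∈ Set.Ioc (0 : ℝ) 1) (z w : ℂ) :
    ‖(Real.log ((ε + ‖z‖ ^ 2) / (1 + ε * ‖z‖ ^ 2)) : ℂ) * z -
        (Real.log ((ε + ‖w‖ ^ 2) / (1 + ε * ‖w‖ ^ 2)) : ℂ) * w‖ ≤
      (2 + |Real.log ε|) * ‖z - w‖ := by
  obtain ⟨hε0, hε1⟩ := hε
  rcases le_total (‖z‖) (‖w‖) with h | h
  · exact stmt8_aux ε hε0 hε1 z w h
  · have hsym := stmt8_aux ε hε0 hε1 w z h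
    rw [show ((Real.log ((ε + ‖z‖ ^ 2) / (1 + ε * ‖z‖ ^ 2)) : ℂ) * z -
        (Real.log ((ε + ‖w‖ ^ 2) / (1 + ε * ‖w‖ ^ 2)) : ℂ) * w) =
        -((Real.log ((ε + ‖w‖ ^ 2) / (1 + ε * ‖w‖ ^ 2)) : ℂ) * w -
        (Real.log ((ε + ‖z‖ ^ 2) / (1 + ε * ‖z‖ ^ 2)) : ℂ) * z) by ring,
      norm_neg]
    rw [norm_sub_rev w z] at hsym
    exact hsym
end

section
/- For every ε ∈ (0,1], every δ ∈ (0,1], and every ρ ≥ 0 one has |∫₀^ρ (log((ε + s)/(1 + εs)) − log s) ds| ≤ ε + ε·log((ρ + ε)/ε) + ε^δ·ρ^{1+δ}/(δ(1+δ)). Equivalently, the regularized entropy density F̃_ε(ρ) = ∫₀^ρ f_ε(s) ds differs from ρ·log ρ − ρ by at most ε + ε·log((ρ + ε)/ε) + ε^δ·ρ^{1+δ}/(δ(1+δ)). -/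
open MeasureTheory Set

/-- `log` is interval-integrable on `[0, ρ]`. -/
lemma aux_log_integrable {ρ : ℝ} (hρ : 0 ≤ ρ) :
    IntervalIntegrable Real.log volume 0 ρ := by
  have hg : IntervalIntegrable (fun s : ℝ => 2 * s ^ (-(1/2) : ℝ) + s) volume 0 ρ :=
    ((intervalIntegral.intervalIntegrable_rpow' (by norm_num)).const_mul 2).add
      intervalIntegral.intervalIntegrable_id
  refine hg.mono_fun Real.measurable_log.aestronglyMeasurable ?_
  filter_upwards [ae_restrict_mem measurableSet_uIoc] with x hx
  rw [Set.uIoc_of_le hρ] at hx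
  have hx0 : 0 < x := hx.1
  have h1 : Real.log x ≤ x := (Real.log_le_sub_one_of_pos hx0).trans (by linarith)
  have h3 : (0:ℝ) < x ^ (-(1/2) : ℝ) := Real.rpow_pos_of_pos hx0 _
  have h2 : (-(1/2) : ℝ) * Real.log x ≤ x ^ (-(1/2) : ℝ) := by
    have := Real.log_le_sub_one_of_pos h3
    rw [Real.log_rpow hx0] at this
    linarith
  have habs : |Real.log x| ≤ 2 * x ^ (-(1/2) : ℝ) + x := by
    rw [abs_le]; constructor <;> nlinarith
  have hge : (0:ℝ) ≤ 2 * x ^ (-(1/2) : ℝ) + x := by positivity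
  rw [Real.norm_eq_abs, Real.norm_eq_abs, abs_of_nonneg hge]
  exact habs

/-- `∫₀^ρ log s ds = ρ log ρ − ρ`. -/
lemma aux_log_integral {ρ : ℝ} (hρ : 0 ≤ ρ) :
    ∫ s in (0:ℝ)..ρ, Real.log s = ρ * Real.log ρ - ρ := by
  have h := intervalIntegral.integral_eq_sub_of_hasDeriv_right_of_le hρ
    (f := fun s => s * Real.log s - s) (f' := Real.log)
    ((Real.continuous_mul_log.sub continuous_id).continuousOn)
    (fun x hx => by
      have hd := (Real.hasDerivAt_mul_log hx.1.ne').sub (hasDerivAt_id x)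
      simpa [Pi.sub_def] using hd.hasDerivWithinAt)
    (aux_log_integrable hρ)
  simpa using h

/-- Subadditivity of `rpow` with exponent `≤ 1`, real version for `1 + x`. -/
lemma aux_one_add_rpow {x δ : ℝ} (hx : 0 ≤ x) (hδ0 : 0 ≤ δ) (hδ1 : δ ≤ 1) :
    (1 + x) ^ δ ≤ 1 + x ^ δ := by
  have h := NNReal.coe_le_coe.2 (NNReal.rpow_add_le_add_rpow 1 x.toNNReal hδ0 hδ1)
  push_cast at h
  simpa [Real.coe_toNNReal x hx] using h

/-- Quantitative closeness of the regularized entropy density to the entropy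
density: for `ε ∈ (0,1]`, `δ ∈ (0,1]` and `ρ ≥ 0`,
`|∫₀^ρ (log((ε + s)/(1 + εs)) − log s) ds|
  ≤ ε + ε log((ρ + ε)/ε) + ε^δ ρ^(1+δ)/(δ(1+δ))`; equivalently the regularized
entropy density `F̃_ε(ρ) = ∫₀^ρ f_ε(s) ds` differs from `ρ log ρ − ρ` by at
most this bound. -/
theorem stmt_11 (ε δ ρ : ℝ) (hε : ε ∈ Set.Ioc (0 : ℝ) 1) (hδ : δ ∈ Set.Ioc (0 : ℝ) 1)
    (hρ : 0 ≤ ρ) :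
    |∫ s in (0 : ℝ)..ρ, (Real.log ((ε + s) / (1 + ε * s)) - Real.log s)| ≤
        ε + ε * Real.log ((ρ + ε) / ε) + ε ^ δ * ρ ^ (1 + δ) / (δ * (1 + δ)) ∧
    |(∫ s in (0 : ℝ)..ρ, Real.log ((ε + s) / (1 + ε * s))) -
        (ρ * Real.log ρ - ρ)| ≤
      ε + ε * Real.log ((ρ + ε) / ε) + ε ^ δ * ρ ^ (1 + δ) / (δ * (1 + δ)) := by
  obtain ⟨hε0, hε1⟩ := hε
  obtain ⟨hδ0, hδ1⟩ := hδ
  have hρε : (0:ℝ) < ρ + ε := by linarith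
  -- integrability facts
  have intlog : IntervalIntegrable Real.log volume 0 ρ := aux_log_integrable hρ
  have int1 : IntervalIntegrable (fun s => Real.log (ε + s)) volume 0 ρ := by
    apply ContinuousOn.intervalIntegrable
    apply ContinuousOn.log (by fun_prop)
    intro x hx
    rw [Set.uIcc_of_le hρ] at hx
    have := hx.1; positivity
  have int2 : IntervalIntegrable (fun s => Real.log (1 + ε * s)) volume 0 ρ := by
    apply ContinuousOn.intervalIntegrable
    apply ContinuousOn.log (by fun_prop)
    intro x hx
    rw [Set.uIcc_of_le hρ] at hx
    have := hx.1; positivity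
  have intf : IntervalIntegrable (fun s => Real.log ((ε + s) / (1 + ε * s))) volume 0 ρ := by
    apply ContinuousOn.intervalIntegrable
    apply ContinuousOn.log
    · apply ContinuousOn.div (by fun_prop) (by fun_prop)
      intro x hx
      rw [Set.uIcc_of_le hρ] at hx
      have := hx.1; positivity
    · intro x hx
      rw [Set.uIcc_of_le hρ] at hx
      have h1 := hx.1; positivity
  -- split the integrand
  have key : (∫ s in (0:ℝ)..ρ, (Real.log ((ε + s) / (1 + ε * s)) - Real.log s))
      = (∫ s in (0:ℝ)..ρ, (Real.log (ε + s) - Real.log s))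
        - ∫ s in (0:ℝ)..ρ, Real.log (1 + ε * s) := by
    rw [← intervalIntegral.integral_sub (int1.sub intlog) int2]
    apply intervalIntegral.integral_congr
    intro s hs
    rw [Set.uIcc_of_le hρ] at hs
    have hs0 : 0 ≤ s := hs.1
    have h1 : (0:ℝ) < ε + s := by linarith
    have h2 : (0:ℝ) < 1 + ε * s := by nlinarith
    simp only [Real.log_div h1.ne' h2.ne']
    ring
  -- value of the first integral
  have hI1 : (∫ s in (0:ℝ)..ρ, (Real.log (ε + s) - Real.log s))
      = (ε + ρ) * Real.log (ε + ρ) - ρ * Real.log ρ - ε * Real.log ε := by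
    rw [intervalIntegral.integral_sub int1 intlog, aux_log_integral hρ]
    have h := intervalIntegral.integral_eq_sub_of_hasDerivAt
      (f := fun s => (ε + s) * Real.log (ε + s) - s)
      (f' := fun s => Real.log (ε + s))
      (fun x hx => by
        rw [Set.uIcc_of_le hρ] at hx
        have hx0 : (0:ℝ) < ε + x := by have := hx.1; linarith
        have hc : HasDerivAt (fun s : ℝ => ε + s) 1 x := by
          simpa using (hasDerivAt_id x).const_add ε
        have hd := ((Real.hasDerivAt_mul_log hx0.ne').comp x hc).sub (hasDerivAt_id x)
        simpa [Pi.sub_def, Function.comp_def] using hd)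
      int1
    rw [h]
    simp [Real.log_zero]
    ring
  -- bounds on the first integral
  have hA0 : 0 ≤ (ε + ρ) * Real.log (ε + ρ) - ρ * Real.log ρ - ε * Real.log ε := by
    have t2 : ε * Real.log ε ≤ ε * Real.log (ε + ρ) := by
      have := Real.log_le_log hε0 (by linarith : ε ≤ ε + ρ)
      nlinarith
    have t1 : ρ * Real.log ρ ≤ ρ * Real.log (ε + ρ) := by
      rcases hρ.eq_or_lt with h | h
      · simp [← h]
      · have := Real.log_le_log h (by linarith : ρ ≤ ε + ρ)
        nlinarith
    nlinarith
  have hA1 : (ε + ρ) * Real.log (ε + ρ) - ρ * Real.log ρ - ε * Real.log ε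
      ≤ ε + ε * (Real.log (ρ + ε) - Real.log ε) := by
    have hcomm : Real.log (ρ + ε) = Real.log (ε + ρ) := by rw [add_comm]
    rw [hcomm]
    have t1 : ρ * Real.log (ε + ρ) - ρ * Real.log ρ ≤ ε := by
      rcases hρ.eq_or_lt with h | h
      · simp [← h]; positivity
      · have hd : (0:ℝ) < (ε + ρ) / ρ := by positivity
        have := Real.log_le_sub_one_of_pos hd
        rw [Real.log_div (by positivity) h.ne'] at this
        have h2 : ρ * (Real.log (ε + ρ) - Real.log ρ) ≤ ρ * ((ε + ρ) / ρ - 1) :=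
          mul_le_mul_of_nonneg_left this hρ
        have h3 : ρ * ((ε + ρ) / ρ - 1) = ε := by field_simp; ring
        nlinarith
    nlinarith
  -- bounds on the second integral
  have hB0 : 0 ≤ ∫ s in (0:ℝ)..ρ, Real.log (1 + ε * s) := by
    apply intervalIntegral.integral_nonneg hρ
    intro x hx
    apply Real.log_nonneg
    nlinarith [hx.1]
  have hB1 : (∫ s in (0:ℝ)..ρ, Real.log (1 + ε * s))
      ≤ ε ^ δ * ρ ^ (1 + δ) / (δ * (1 + δ)) := by
    have intg : IntervalIntegrable (fun s : ℝ => ε ^ δ / δ * s ^ δ) volume 0 ρ :=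
      (intervalIntegral.intervalIntegrable_rpow' (by linarith)).const_mul _
    have mono := intervalIntegral.integral_mono_on hρ int2 intg (fun x hx => by
      have hx0 : 0 ≤ x := hx.1
      have hy0 : (0:ℝ) ≤ ε * x := by positivity
      have hpos : (0:ℝ) < 1 + ε * x := by linarith
      have l1 : δ * Real.log (1 + ε * x) ≤ (1 + ε * x) ^ δ - 1 := by
        have := Real.log_le_sub_one_of_pos (Real.rpow_pos_of_pos hpos δ)
        rwa [Real.log_rpow hpos] at this
      have l2 : (1 + ε * x) ^ δ ≤ 1 + (ε * x) ^ δ := aux_one_add_rpow hy0 hδ0.le hδ1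
      have l3 : (ε * x) ^ δ = ε ^ δ * x ^ δ := Real.mul_rpow hε0.le hx0
      rw [div_mul_eq_mul_div, le_div_iff₀ hδ0, mul_comm]
      nlinarith)
    rw [intervalIntegral.integral_const_mul,
      integral_rpow (Or.inl (by linarith : (-1:ℝ) < δ))] at mono
    rw [Real.zero_rpow (by linarith : δ + 1 ≠ 0)] at mono
    have heq : ε ^ δ / δ * ((ρ ^ (δ + 1) - 0) / (δ + 1))
        = ε ^ δ * ρ ^ (1 + δ) / (δ * (1 + δ)) := by
      rw [add_comm δ 1]
      field_simp
      try ring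
    linarith [heq ▸ mono]
  -- nonnegativity of the bound pieces
  have hC1 : 0 ≤ ε + ε * (Real.log (ρ + ε) - Real.log ε) := by
    have : Real.log ε ≤ Real.log (ρ + ε) := Real.log_le_log hε0 (by linarith)
    nlinarith
  have hC2 : 0 ≤ ε ^ δ * ρ ^ (1 + δ) / (δ * (1 + δ)) := by positivity
  -- main estimate
  have hlogdiv : Real.log ((ρ + ε) / ε) = Real.log (ρ + ε) - Real.log ε :=
    Real.log_div hρε.ne' hε0.ne'
  have main : |(∫ s in (0:ℝ)..ρ, (Real.log ((ε + s) / (1 + ε * s)) - Real.log s))| ≤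
      ε + ε * Real.log ((ρ + ε) / ε) + ε ^ δ * ρ ^ (1 + δ) / (δ * (1 + δ)) := by
    rw [key, hI1, hlogdiv, abs_le]
    constructor <;> linarith
  refine ⟨main, ?_⟩
  have key2 : (∫ s in (0:ℝ)..ρ, Real.log ((ε + s) / (1 + ε * s))) - (ρ * Real.log ρ - ρ)
      = ∫ s in (0:ℝ)..ρ, (Real.log ((ε + s) / (1 + ε * s)) - Real.log s) := by
    rw [intervalIntegral.integral_sub intf intlog, aux_log_integral hρ]
  rw [key2]
  exact main
end

section
/- Fix ε ∈ (0,1], λ ∈ ℝ, and t ≥ 0, and set f_ε(x) = log((ε + x)/(1 + εx)). Then the flow map G_t : ℂ → ℂ, G_t(z) = z·exp(i·λ·t·f_ε(|z|²)), is Lipschitz continuous with Lipschitz constant at most 1 + 2|λ|t; that is, |z·exp(iλt f_ε(|z|²)) − w·exp(iλt f_ε(|w|²))| ≤ (1 + 2|λ|t)·|z − w| for all z, w ∈ ℂ. (This is the stability estimate for the subsystem flow Φ_f^t used in the strong convergence proofs for the splitting schemes.) -/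
open Complex Set

private lemma expI_lip (α β : ℝ) :
    ‖Complex.exp (↑α * Complex.I) - Complex.exp (↑β * Complex.I)‖ ≤ |α - β| := by
  have key : ∀ x : ℝ, HasDerivAt (fun s : ℝ => Complex.exp (↑s * Complex.I))
      (Complex.exp (↑x * Complex.I) * Complex.I) x := by
    intro x
    have h1 : HasDerivAt (fun s : ℝ => (s : ℂ) * Complex.I) Complex.I x := by
      simpa using (Complex.ofRealCLM.hasDerivAt (x := x)).mul_const Complex.I
    simpa using h1.cexp
  have := convex_univ.norm_image_sub_le_of_norm_hasDerivWithin_le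
    (f := fun s : ℝ => Complex.exp (↑s * Complex.I))
    (f' := fun x : ℝ => Complex.exp (↑x * Complex.I) * Complex.I) (C := 1)
    (fun x _ => (key x).hasDerivWithinAt)
    (fun x _ => by simp [Complex.norm_exp]) (Set.mem_univ β) (Set.mem_univ α)
  simpa using this

private lemma log_bound (ε a b : ℝ) (hε0 : 0 < ε) (hε1 : ε ≤ 1) (hb : 0 ≤ b) (hba : b ≤ a) :
    b * |Real.log ((ε + a ^ 2) / (1 + ε * a ^ 2)) -
        Real.log ((ε + b ^ 2) / (1 + ε * b ^ 2))| ≤ 2 * (a - b) := by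
  have pos1 : ∀ s : ℝ, 0 < ε + s ^ 2 := fun s => by positivity
  have pos2 : ∀ s : ℝ, 0 < 1 + ε * s ^ 2 := fun s => by positivity
  set F : ℝ → ℝ := fun s => b * (Real.log (ε + s ^ 2) - Real.log (1 + ε * s ^ 2)) with hF
  set F' : ℝ → ℝ := fun s => b * (2 * s / (ε + s ^ 2) - ε * (2 * s) / (1 + ε * s ^ 2)) with hF'
  have hder : ∀ x : ℝ, HasDerivAt F (F' x) x := by
    intro x
    have h1 : HasDerivAt (fun s : ℝ => Real.log (ε + s ^ 2)) (2 * x / (ε + x ^ 2)) x := by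
      have := ((hasDerivAt_pow 2 x).const_add ε).log (ne_of_gt (pos1 x))
      simpa using this
    have h2 : HasDerivAt (fun s : ℝ => Real.log (1 + ε * s ^ 2))
        (ε * (2 * x) / (1 + ε * x ^ 2)) x := by
      have := (((hasDerivAt_pow 2 x).const_mul ε).const_add 1).log (ne_of_gt (pos2 x))
      simpa [mul_comm, mul_assoc] using this
    simpa [hF, hF'] using ((h1.sub h2).const_mul b)
  have hbound : ∀ x ∈ Set.Icc b a, ‖F' x‖ ≤ 2 := by
    intro x hx
    obtain ⟨hbx, hxa⟩ := hx
    have hx0 : 0 ≤ x := le_trans hb hbx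
    have hp := pos1 x
    have hq := pos2 x
    have hsimp : F' x = b * (2 * x * (1 - ε ^ 2)) / ((ε + x ^ 2) * (1 + ε * x ^ 2)) := by
      simp only [hF']
      rw [div_sub_div _ _ hp.ne' hq.ne', ← mul_div_assoc]
      congr 1
      ring
    rw [Real.norm_eq_abs, hsimp, _root_.abs_of_nonneg]
    · rw [div_le_iff₀ (by positivity)]
      have h1 : b * (2 * x * (1 - ε ^ 2)) ≤ 2 * x ^ 2 := by
        nlinarith [mul_nonneg hx0 (sub_nonneg.mpr hbx),
          mul_nonneg (mul_nonneg hb hx0) (sq_nonneg ε)]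
      have h2 : 2 * x ^ 2 ≤ 2 * ((ε + x ^ 2) * (1 + ε * x ^ 2)) := by
        nlinarith [mul_nonneg hε0.le (mul_nonneg (sq_nonneg x) hp.le)]
      linarith
    · have h1 : 0 ≤ 1 - ε ^ 2 := by nlinarith
      positivity
  have hmvt := (convex_Icc b a).norm_image_sub_le_of_norm_hasDerivWithin_le
    (f := F) (f' := F') (C := 2)
    (fun x _ => (hder x).hasDerivWithinAt) hbound
    (Set.left_mem_Icc.mpr hba) (Set.right_mem_Icc.mpr hba)
  have hFa : F a - F b = b * (Real.log ((ε + a ^ 2) / (1 + ε * a ^ 2)) -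
      Real.log ((ε + b ^ 2) / (1 + ε * b ^ 2))) := by
    rw [Real.log_div (ne_of_gt (pos1 a)) (ne_of_gt (pos2 a)),
        Real.log_div (ne_of_gt (pos1 b)) (ne_of_gt (pos2 b))]
    simp only [hF]; ring
  have : ‖F a - F b‖ = b * |Real.log ((ε + a ^ 2) / (1 + ε * a ^ 2)) -
      Real.log ((ε + b ^ 2) / (1 + ε * b ^ 2))| := by
    rw [hFa, Real.norm_eq_abs, abs_mul, _root_.abs_of_nonneg hb]
  rw [this] at hmvt
  calc b * |Real.log ((ε + a ^ 2) / (1 + ε * a ^ 2)) -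
      Real.log ((ε + b ^ 2) / (1 + ε * b ^ 2))| ≤ 2 * ‖a - b‖ := hmvt
    _ = 2 * (a - b) := by rw [Real.norm_eq_abs, _root_.abs_of_nonneg (show (0:ℝ) ≤ a - b by linarith)]

private lemma main_aux (ε lam t : ℝ) (hε : ε ∈ Set.Ioc (0 : ℝ) 1) (ht : 0 ≤ t) (z w : ℂ)
    (hba : ‖w‖ ≤ ‖z‖) :
    ‖z * Complex.exp (Complex.I * (lam : ℂ) * (t : ℂ) *
            (Real.log ((ε + ‖z‖ ^ 2) / (1 + ε * ‖z‖ ^ 2)) : ℂ)) -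
          w * Complex.exp (Complex.I * (lam : ℂ) * (t : ℂ) *
            (Real.log ((ε + ‖w‖ ^ 2) / (1 + ε * ‖w‖ ^ 2)) : ℂ))‖ ≤
      (1 + 2 * |lam| * t) * ‖z - w‖ := by
  obtain ⟨hε0, hε1⟩ := hε
  set a := ‖z‖ with ha
  set b := ‖w‖ with hb
  have hb0 : 0 ≤ b := norm_nonneg w
  set rz : ℝ := Real.log ((ε + a ^ 2) / (1 + ε * a ^ 2)) with hrz
  set rw' : ℝ := Real.log ((ε + b ^ 2) / (1 + ε * b ^ 2)) with hrw
  set θz : ℝ := lam * t * rz with hθz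
  set θw : ℝ := lam * t * rw' with hθw
  have hez : Complex.I * (lam : ℂ) * (t : ℂ) * (rz : ℂ) = ↑θz * Complex.I := by
    push_cast [hθz]; ring
  have hew : Complex.I * (lam : ℂ) * (t : ℂ) * (rw' : ℂ) = ↑θw * Complex.I := by
    push_cast [hθw]; ring
  rw [hez, hew]
  set Ez := Complex.exp (↑θz * Complex.I) with hEz
  set Ew := Complex.exp (↑θw * Complex.I) with hEw
  have habsEz : ‖Ez‖ = 1 := by simp [hEz, Complex.norm_exp]
  have hsplit : z * Ez - w * Ew = (z - w) * Ez + w * (Ez - Ew) := by ring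
  have hab : a - b ≤ ‖z - w‖ := by
    have := abs_norm_sub_norm_le z w
    calc a - b ≤ |a - b| := le_abs_self _
      _ ≤ ‖z - w‖ := this
  have hlog : b * |rz - rw'| ≤ 2 * (a - b) := log_bound ε a b hε0 hε1 hb0 hba
  have hexp : ‖Ez - Ew‖ ≤ |θz - θw| := expI_lip θz θw
  have hθ : |θz - θw| = |lam| * t * |rz - rw'| := by
    rw [hθz, hθw, ← mul_sub, abs_mul, abs_mul, _root_.abs_of_nonneg ht]
  calc ‖z * Ez - w * Ew‖
      = ‖(z - w) * Ez + w * (Ez - Ew)‖ := by rw [hsplit]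
    _ ≤ ‖(z - w) * Ez‖ + ‖w * (Ez - Ew)‖ := norm_add_le _ _
    _ = ‖z - w‖ + b * ‖Ez - Ew‖ := by
        rw [norm_mul, norm_mul, habsEz, mul_one, ← hb]
    _ ≤ ‖z - w‖ + b * (|lam| * t * |rz - rw'|) := by
        have := mul_le_mul_of_nonneg_left (hθ ▸ hexp) hb0
        linarith
    _ = ‖z - w‖ + |lam| * t * (b * |rz - rw'|) := by ring
    _ ≤ ‖z - w‖ + |lam| * t * (2 * (a - b)) := by
        have := mul_le_mul_of_nonneg_left hlog (mul_nonneg (abs_nonneg lam) ht)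
        linarith
    _ ≤ ‖z - w‖ + |lam| * t * (2 * ‖z - w‖) := by
        have h2 : (2 : ℝ) * (a - b) ≤ 2 * ‖z - w‖ := by linarith
        have := mul_le_mul_of_nonneg_left h2 (mul_nonneg (abs_nonneg lam) ht)
        linarith
    _ = (1 + 2 * |lam| * t) * ‖z - w‖ := by ring

/-- Stability of the subsystem flow `Φ_f^t(z) = z exp(iλt f_ε(|z|²))` used in
the strong convergence proofs: for `ε ∈ (0,1]`, `λ ∈ ℝ`, `t ≥ 0` and all
`z, w : ℂ`,
`|z exp(iλt f_ε(|z|²)) − w exp(iλt f_ε(|w|²))| ≤ (1 + 2|λ|t)|z − w|`,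
where `f_ε(x) = log((ε + x)/(1 + εx))`. -/
theorem stmt_13 (ε lam t : ℝ) (hε : ε ∈ Set.Ioc (0 : ℝ) 1) (ht : 0 ≤ t) (z w : ℂ) :
    ‖(z * Complex.exp (Complex.I * (lam : ℂ) * (t : ℂ) *
            (Real.log ((ε + ‖z‖ ^ 2) / (1 + ε * ‖z‖ ^ 2)) : ℂ)) -
          w * Complex.exp (Complex.I * (lam : ℂ) * (t : ℂ) *
            (Real.log ((ε + ‖w‖ ^ 2) / (1 + ε * ‖w‖ ^ 2)) : ℂ)))‖ ≤
      (1 + 2 * |lam| * t) * ‖z - w‖ := by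
  rcases le_total (‖w‖) (‖z‖) with h | h
  · exact main_aux ε lam t hε ht z w h
  · have hmain := main_aux ε lam t hε ht w z h
    have hcomm : ∀ u v : ℂ, ‖u - v‖ = ‖v - u‖ := fun u v => by
      rw [← norm_neg, neg_sub]
    rw [hcomm, hcomm z w]
    exact hmain
end

section
/- Let d ≥ 1 be an integer, α ∈ (0,1], and δ > 0. Let v : ℝ^d → ℂ be measurable and suppose that ∫_{ℝ^d} (1 + |x|²)^α·|v(x)|² dx < ∞ and ∫_{ℝ^d} |v(x)|^{2+2δ} dx < ∞. Then the function x ↦ |v(x)|²·log(|v(x)|²) is Lebesgue integrable on ℝ^d. (This is the deterministic core of Lemma 'lm-mod-en': the entropy F(|v|²) = ∫(|v|² log|v|² − |v|²)dx is well-defined for v in H¹ ∩ L²_α.) -/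
open MeasureTheory

/-- `log y ≤ y^c / c` for `y ≥ 1`, `c > 0`. -/
lemma aux_log_le_rpow_div {y c : ℝ} (hy : 1 ≤ y) (hc : 0 < c) :
    Real.log y ≤ y ^ c / c := by
  have hy0 : 0 < y := lt_of_lt_of_le one_pos hy
  have h1 : Real.log (y ^ c) = c * Real.log y := Real.log_rpow hy0 c
  have h2 : Real.log (y ^ c) ≤ y ^ c - 1 :=
    Real.log_le_sub_one_of_pos (Real.rpow_pos_of_pos hy0 c)
  have : c * Real.log y ≤ y ^ c := by
    rw [← h1]; linarith
  rw [div_eq_inv_mul, ← inv_mul_cancel_left₀ (ne_of_gt hc) (Real.log y)]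
  exact mul_le_mul_of_nonneg_left this (by positivity)

/-- Key pointwise estimate. -/
lemma aux_key {α δ β s R : ℝ} (hα : 0 < α) (hδ : 0 < δ) (hβ : 0 < β)
    (hs : 0 ≤ s) (hR : 1 ≤ R) :
    |s * Real.log s| ≤ (1 / δ) * s ^ (1 + δ) + (β / α) * R ^ α * s + 2 * R ^ (-β / 2) := by
  have hR0 : 0 < R := lt_of_lt_of_le one_pos hR
  have hRα : 0 ≤ R ^ α := (Real.rpow_pos_of_pos hR0 α).le
  have hRb : 0 ≤ 2 * R ^ (-β / 2) := by positivity
  rcases eq_or_lt_of_le hs with h0 | hs0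
  · simp only [← h0, zero_mul, abs_zero]
    have : (0:ℝ) ≤ (1 / δ) * (0:ℝ) ^ (1 + δ) := by positivity
    nlinarith
  rcases le_or_gt 1 s with h1 | h1
  · -- s ≥ 1
    have hlog : 0 ≤ Real.log s := Real.log_nonneg h1
    rw [abs_of_nonneg (mul_nonneg hs hlog)]
    have : Real.log s ≤ s ^ δ / δ := aux_log_le_rpow_div h1 hδ
    have hmul : s * Real.log s ≤ s * (s ^ δ / δ) :=
      mul_le_mul_of_nonneg_left this hs
    have heq : s * (s ^ δ / δ) = (1 / δ) * s ^ (1 + δ) := by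
      rw [Real.rpow_add hs0, Real.rpow_one]; ring
    have h2 : 0 ≤ (β / α) * R ^ α * s := by positivity
    nlinarith [hmul, heq ▸ hmul]
  · -- 0 < s < 1
    have hlog : Real.log s ≤ 0 := Real.log_nonpos hs (le_of_lt h1)
    rw [abs_of_nonpos (mul_nonpos_of_nonneg_of_nonpos hs hlog)]
    have hinv : 1 ≤ s⁻¹ := (one_le_inv₀ hs0).mpr (le_of_lt h1)
    rcases le_or_gt (R ^ (-β)) s with hcase | hcase
    · -- moderate s
      have hlogR : Real.log R ≤ R ^ α / α := aux_log_le_rpow_div hR hα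
      have h3 : -Real.log s ≤ β * Real.log R := by
        have := Real.log_le_log (Real.rpow_pos_of_pos hR0 (-β)) hcase
        rw [Real.log_rpow hR0] at this
        linarith
      have h4 : -(s * Real.log s) ≤ (β / α) * R ^ α * s := by
        have : s * (-Real.log s) ≤ s * (β * (R ^ α / α)) :=
          mul_le_mul_of_nonneg_left (le_trans h3
            (mul_le_mul_of_nonneg_left hlogR hβ.le)) hs
        calc -(s * Real.log s) = s * (-Real.log s) := by ring
        _ ≤ s * (β * (R ^ α / α)) := this
        _ = (β / α) * R ^ α * s := by ring
      have h5 : 0 ≤ (1 / δ) * s ^ (1 + δ) := by positivity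
      linarith
    · -- tiny s
      have h3 : -Real.log s ≤ 2 * s⁻¹ ^ ((1:ℝ)/2) := by
        have := aux_log_le_rpow_div hinv (by norm_num : (0:ℝ) < 1/2)
        rw [Real.log_inv] at this
        linarith
      have h4 : -(s * Real.log s) ≤ 2 * s ^ ((1:ℝ)/2) := by
        have hmul : s * (-Real.log s) ≤ s * (2 * s⁻¹ ^ ((1:ℝ)/2)) :=
          mul_le_mul_of_nonneg_left h3 hs
        have e1 : s⁻¹ ^ ((1:ℝ)/2) = s ^ (-(1/2:ℝ)) := by
          rw [Real.inv_rpow hs, ← Real.rpow_neg hs]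
        have e2 : s * s ^ (-(1/2:ℝ)) = s ^ ((1:ℝ)/2) := by
          calc s * s ^ (-(1/2:ℝ)) = s ^ (1:ℝ) * s ^ (-(1/2:ℝ)) := by rw [Real.rpow_one]
          _ = s ^ ((1:ℝ) + -(1/2)) := (Real.rpow_add hs0 _ _).symm
          _ = s ^ ((1:ℝ)/2) := by norm_num
        have heq : s * (2 * s⁻¹ ^ ((1:ℝ)/2)) = 2 * s ^ ((1:ℝ)/2) := by
          rw [e1, ← e2]; ring
        calc -(s * Real.log s) = s * (-Real.log s) := by ring
        _ ≤ s * (2 * s⁻¹ ^ ((1:ℝ)/2)) := hmul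
        _ = 2 * s ^ ((1:ℝ)/2) := heq
      have h5 : s ^ ((1:ℝ)/2) ≤ R ^ (-β / 2) := by
        have := Real.rpow_le_rpow hs hcase.le (by norm_num : (0:ℝ) ≤ 1/2)
        rwa [← Real.rpow_mul hR0.le, neg_mul, mul_one_div, ← neg_div] at this
      have h6 : 0 ≤ (1 / δ) * s ^ (1 + δ) := by positivity
      have h7 : 0 ≤ (β / α) * R ^ α * s := by positivity
      linarith

/-- Deterministic core of Lemma lm-mod-en: if `v : ℝ^d → ℂ` is measurable with
`∫ (1 + |x|²)^α |v|² dx < ∞` and `∫ |v|^{2+2δ} dx < ∞` (for some `α ∈ (0,1]`,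
`δ > 0`), then `x ↦ |v(x)|² log(|v(x)|²)` is Lebesgue integrable on `ℝ^d`
(with the convention `log 0 = 0`). -/
theorem stmt_16 (d : ℕ) (hd : 1 ≤ d) (α δ : ℝ) (hα : α ∈ Set.Ioc (0 : ℝ) 1) (hδ : 0 < δ)
    (v : EuclideanSpace ℝ (Fin d) → ℂ) (hv : Measurable v)
    (h1 : ∫⁻ x, ENNReal.ofReal ((1 + ‖x‖ ^ 2) ^ α * ‖v x‖ ^ 2) < ⊤)
    (h2 : ∫⁻ x, ENNReal.ofReal (‖v x‖ ^ (2 + 2 * δ)) < ⊤) :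
    Integrable (fun x => ‖v x‖ ^ 2 * Real.log (‖v x‖ ^ 2)) := by
  obtain ⟨hα0, hα1⟩ := hα
  -- Integrable pieces
  have habs : Measurable (fun x => ‖v x‖) :=
    continuous_norm.measurable.comp hv
  have hAm : Measurable (fun x => ‖v x‖ ^ (2 + 2 * δ)) :=
    (Real.continuous_rpow_const (by positivity)).measurable.comp habs
  have hA : Integrable (fun x => ‖v x‖ ^ (2 + 2 * δ)) := by
    refine ⟨hAm.aestronglyMeasurable, ?_⟩
    rw [hasFiniteIntegral_iff_ofReal (ae_of_all _ fun x =>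
      Real.rpow_nonneg (norm_nonneg _) _)]
    exact h2
  have hBm : Measurable (fun x : EuclideanSpace ℝ (Fin d) =>
      (1 + ‖x‖ ^ 2) ^ α * ‖v x‖ ^ 2) :=
    (((continuous_const.add (continuous_norm.pow 2)).rpow_const
      (fun x => Or.inr hα0.le)).measurable).mul (habs.pow_const 2)
  have hB : Integrable (fun x : EuclideanSpace ℝ (Fin d) =>
      (1 + ‖x‖ ^ 2) ^ α * ‖v x‖ ^ 2) := by
    refine ⟨hBm.aestronglyMeasurable, ?_⟩
    rw [hasFiniteIntegral_iff_ofReal (ae_of_all _ fun x => by positivity)]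
    exact h1
  have hfr : ((Module.finrank ℝ (EuclideanSpace ℝ (Fin d))) : ℝ) < (d : ℝ) + 1 := by
    rw [finrank_euclideanSpace_fin]; exact lt_add_one _
  have hC : Integrable (fun x : EuclideanSpace ℝ (Fin d) =>
      ((1:ℝ) + ‖x‖ ^ 2) ^ (-((d:ℝ) + 1) / 2)) :=
    integrable_rpow_neg_one_add_norm_sq (μ := volume)
      (E := EuclideanSpace ℝ (Fin d)) hfr
  -- dominating function
  have hg : Integrable (fun x : EuclideanSpace ℝ (Fin d) =>
      (1 / δ) * ‖v x‖ ^ (2 + 2 * δ)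
      + (((d:ℝ) + 1) / α) * (1 + ‖x‖ ^ 2) ^ α * ‖v x‖ ^ 2
      + 2 * ((1:ℝ) + ‖x‖ ^ 2) ^ (-((d:ℝ) + 1) / 2)) := by
    refine Integrable.add (Integrable.add (hA.const_mul _) ?_) (hC.const_mul _)
    have := hB.const_mul (((d:ℝ) + 1) / α)
    simpa [mul_assoc] using this
  refine hg.mono' ?_ (ae_of_all _ fun x => ?_)
  · exact ((Real.continuous_mul_log.measurable.comp (habs.pow_const 2))).aestronglyMeasurable
  · have hR : 1 ≤ (1:ℝ) + ‖x‖ ^ 2 := le_add_of_nonneg_right (sq_nonneg _)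
    have hβ : (0:ℝ) < (d:ℝ) + 1 := by positivity
    have key := aux_key (s := ‖v x‖ ^ 2) (R := 1 + ‖x‖ ^ 2)
      hα0 hδ hβ (sq_nonneg _) hR
    have hexp : (‖v x‖ ^ 2 : ℝ) ^ (1 + δ)
        = ‖v x‖ ^ (2 + 2 * δ) := by
      rw [← Real.rpow_natCast (‖v x‖) 2,
        ← Real.rpow_mul (norm_nonneg _)]
      norm_num
      ring_nf
    rw [hexp] at key
    rw [Real.norm_eq_abs]
    exact key
end
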